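/- arXiv:1702.02105 — 3 statements merged into one kernel-verified Lean document; each statement's English description precedes it below -/
import Mathlib

section
/- Let Q = (0,1)^N be the open unit cube in ℝ^N and A an N×N real matrix. Let u : ℝ^N → ℝ^N be continuous on the closed cube [0,1]^N, differentiable at every point of Q with derivative Du(x) (an N×N matrix), such that x ↦ tr(Du(x)) is Lebesgue integrable on Q and u(x) = Ax for every x in the boundary ∂Q. Then ∫_Q tr(Du(x)) dx = tr A. -/
/-!
By the divergence theorem, `∫_Q div u` is the flux of `u` through `∂Q`, which only depends on the
boundary values of `u`. Since `u` agrees with `x ↦ A x` on `∂Q`, the flux is that of the linear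
field, whose divergence is the constant `tr A`; as `|Q| = 1`, the flux equals `tr A`.
-/

open MeasureTheory

/-- The open unit cube `(0,1)^N` in `ℝ^N`. -/
def openCube (N : ℕ) : Set (Fin N → ℝ) := Set.univ.pi fun _ => Set.Ioo (0 : ℝ) 1

open Set

theorem LinearMap.trace_pi_eq_sum {R ι : Type*} [CommRing R] [Fintype ι] [DecidableEq ι]
    (f : (ι → R) →ₗ[R] ι → R) : trace R (ι → R) f = ∑ i, f (Pi.single i 1) i := by
  have h := Matrix.trace_toLin'_eq (LinearMap.toMatrix' f)
  rw [Matrix.toLin'_toMatrix'] at h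
  exact h

lemma isOpen_openCube (N : ℕ) : IsOpen (openCube N) :=
  isOpen_set_pi finite_univ fun _ _ => isOpen_Ioo

lemma closure_openCube (N : ℕ) : closure (openCube N) = Icc 0 1 := by
  rw [openCube, closure_pi_set, closure_Ioo zero_ne_one, pi_univ_Icc]
  rfl

lemma openCube_ae_eq_Icc (N : ℕ) : openCube N =ᵐ[volume] Icc (0 : Fin N → ℝ) 1 :=
  Measure.univ_pi_Ioo_ae_eq_Icc

lemma mem_frontier_openCube {N : ℕ} {x : Fin N → ℝ} (hx : x ∈ Icc 0 1) {i : Fin N}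
    (hi : x i = 0 ∨ x i = 1) : x ∈ frontier (openCube N) := by
  rw [(isOpen_openCube N).frontier_eq, closure_openCube]
  refine ⟨hx, fun h => ?_⟩
  obtain ⟨h0, h1⟩ := h i (mem_univ i)
  rcases hi with hi | hi <;> simp [hi] at h0 h1

lemma insertNth_mem_frontier_openCube {n : ℕ} (i : Fin (n + 1)) {c : ℝ} (hc : c = 0 ∨ c = 1)
    {x : Fin n → ℝ} (hx : x ∈ Icc 0 1) : i.insertNth c x ∈ frontier (openCube (n + 1)) := by
  refine mem_frontier_openCube (Fin.insertNth_mem_Icc.2 ⟨?_, hx⟩) (i := i) (by simpa using hc)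
  rcases hc with rfl | rfl <;> simp

/-- The outward flux `∫_{∂Q} f · ν` through the boundary of the unit cube `Q = [0,1]^(n+1)`,
face `i` contributing the `i`-th component of `f` integrated over `{xᵢ = 1}` minus that over
`{xᵢ = 0}`. -/
noncomputable def unitCubeFlux {n : ℕ} (f : (Fin (n + 1) → ℝ) → Fin (n + 1) → ℝ) : ℝ :=
  ∑ i : Fin (n + 1), ((∫ x in Icc (0 : Fin n → ℝ) 1, f (i.insertNth 1 x) i) -
    ∫ x in Icc (0 : Fin n → ℝ) 1, f (i.insertNth 0 x) i)

lemma unitCubeFlux_congr {n : ℕ} {f g : (Fin (n + 1) → ℝ) → Fin (n + 1) → ℝ}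
    (h : ∀ x ∈ frontier (openCube (n + 1)), f x = g x) : unitCubeFlux f = unitCubeFlux g := by
  refine Finset.sum_congr rfl fun i _ => ?_
  have hface : ∀ c : ℝ, c = 0 ∨ c = 1 → ∫ x in Icc (0 : Fin n → ℝ) 1, f (i.insertNth c x) i =
      ∫ x in Icc (0 : Fin n → ℝ) 1, g (i.insertNth c x) i := fun c hc =>
    setIntegral_congr_fun measurableSet_Icc fun x hx => by
      rw [h _ (insertNth_mem_frontier_openCube i hc hx)]
  rw [hface 1 (Or.inr rfl), hface 0 (Or.inl rfl)]

lemma integral_unitCube_eq_unitCubeFlux {n : ℕ} {f : (Fin (n + 1) → ℝ) → Fin (n + 1) → ℝ}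
    {f' : (Fin (n + 1) → ℝ) → (Fin (n + 1) → ℝ) →L[ℝ] Fin (n + 1) → ℝ}
    (hc : ContinuousOn f (Icc 0 1)) (hd : ∀ x ∈ openCube (n + 1), HasFDerivAt f (f' x) x)
    (hi : IntegrableOn (fun x => ∑ i, f' x (Pi.single i 1) i) (Icc 0 1)) :
    ∫ x in Icc 0 1, ∑ i, f' x (Pi.single i 1) i = unitCubeFlux f := by
  rw [integral_divergence_of_hasFDerivAt_off_countable 0 1 zero_le_one f f' ∅ countable_empty hc
    (fun x hx => hd x hx.1) hi]
  rfl

lemma unitCubeFlux_mulVec {n : ℕ} (A : Matrix (Fin (n + 1)) (Fin (n + 1)) ℝ) :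
    unitCubeFlux A.mulVec = A.trace := by
  let L := (Matrix.toLin' A).toContinuousLinearMap
  rw [← integral_unitCube_eq_unitCubeFlux (f := A.mulVec) (f' := fun _ => L)
    L.continuous.continuousOn (fun x _ => L.hasFDerivAt)
    (integrableOn_const isCompact_Icc.measure_lt_top.ne enorm_ne_top)]
  simp [L, Matrix.trace, Measure.real, Real.volume_Icc_pi]

theorem integral_trace_fderiv_eq_trace_general (N : ℕ)
    (A : Matrix (Fin N) (Fin N) ℝ)
    (u : (Fin N → ℝ) → Fin N → ℝ)
    (Du : (Fin N → ℝ) → ((Fin N → ℝ) →L[ℝ] (Fin N → ℝ)))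
    (hcont : ContinuousOn u (Set.Icc (0 : Fin N → ℝ) 1))
    (hdiff : ∀ x ∈ openCube N, HasFDerivAt u (Du x) x)
    (hint : IntegrableOn
      (fun x => LinearMap.trace ℝ (Fin N → ℝ) (Du x : (Fin N → ℝ) →ₗ[ℝ] (Fin N → ℝ)))
      (openCube N))
    (hbdry : ∀ x ∈ frontier (openCube N), u x = A.mulVec x) :
    ∫ x in openCube N,
        LinearMap.trace ℝ (Fin N → ℝ) (Du x : (Fin N → ℝ) →ₗ[ℝ] (Fin N → ℝ)) =
      A.trace := by
  simp only [LinearMap.trace_pi_eq_sum, ContinuousLinearMap.coe_coe] at hint ⊢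
  cases N with
  | zero => simp
  | succ n =>
    have hint' := hint.congr_set_ae (openCube_ae_eq_Icc _).symm
    rw [setIntegral_congr_set (openCube_ae_eq_Icc _),
      integral_unitCube_eq_unitCubeFlux hcont hdiff hint', unitCubeFlux_congr hbdry,
      unitCubeFlux_mulVec]

/-- Divergence identity for competitors with affine boundary values: if `u` is continuous
on the closed unit cube, differentiable on the open cube `Q = (0,1)^N` with derivative
`Du`, `x ↦ tr(Du x)` is integrable on `Q`, and `u = Ax` on `∂Q`, then
`∫_Q tr(Du) = tr A`. -/
theorem integral_trace_fderiv_eq_trace (N : ℕ) (hN : 1 ≤ N)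
    (A : Matrix (Fin N) (Fin N) ℝ)
    (u : (Fin N → ℝ) → Fin N → ℝ)
    (Du : (Fin N → ℝ) → ((Fin N → ℝ) →L[ℝ] (Fin N → ℝ)))
    (hcont : ContinuousOn u (Set.Icc (0 : Fin N → ℝ) 1))
    (hdiff : ∀ x ∈ openCube N, HasFDerivAt u (Du x) x)
    (hint : IntegrableOn
      (fun x => LinearMap.trace ℝ (Fin N → ℝ) (Du x : (Fin N → ℝ) →ₗ[ℝ] (Fin N → ℝ)))
      (openCube N))
    (hbdry : ∀ x ∈ frontier (openCube N), u x = A.mulVec x) :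
    ∫ x in openCube N,
        LinearMap.trace ℝ (Fin N → ℝ) (Du x : (Fin N → ℝ) →ₗ[ℝ] (Fin N → ℝ)) =
      A.trace :=
  integral_trace_fderiv_eq_trace_general N A u Du hcont hdiff hint hbdry
end

section
/- An N×N real matrix C has trace zero if and only if there exist finitely many pairs of vectors a₁, …, a_m, b₁, …, b_m ∈ ℝ^N with aᵢ · bᵢ = 0 for every i such that C = ∑_{i=1}^m aᵢ ⊗ bᵢ, where a ⊗ b denotes the rank-one matrix with entries (a ⊗ b)_{jk} = a_j b_k. -/
/-!
The trace of `a ⊗ b` is `a ⬝ᵥ b`, so isotropic rank-one matrices span a subspace of the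
trace-zero matrices. Conversely, every off-diagonal matrix unit `E_jk = e_j ⊗ e_k` is isotropic,
and `E_jj - E_kk = (e_j + e_k) ⊗ (e_j - e_k) + E_jk - E_kj`; hence every matrix `C` is congruent
to `(trace C) • E_00` modulo the span. Since the isotropic rank-one matrices are closed under
scaling, their span consists of plain finite sums of them.
-/

open Matrix

namespace Matrix

variable {R n : Type*} [CommRing R] [Fintype n]

def isotropicRankOneSpan (R n : Type*) [CommRing R] [Fintype n] : Submodule R (Matrix n n R) :=
  Submodule.span R {M | ∃ a b : n → R, a ⬝ᵥ b = 0 ∧ vecMulVec a b = M}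

theorem vecMulVec_mem_isotropicRankOneSpan {a b : n → R} (h : a ⬝ᵥ b = 0) :
    vecMulVec a b ∈ isotropicRankOneSpan R n :=
  Submodule.subset_span ⟨a, b, h, rfl⟩

theorem mem_isotropicRankOneSpan_iff {M : Matrix n n R} :
    M ∈ isotropicRankOneSpan R n ↔ ∃ (m : ℕ) (a b : Fin m → n → R),
      (∀ i, a i ⬝ᵥ b i = 0) ∧ M = ∑ i, vecMulVec (a i) (b i) := by
  constructor
  · intro hM
    obtain ⟨m, c, g, rfl⟩ := Submodule.mem_span_set'.mp hM
    choose a b hab hg using fun i => (g i).2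
    refine ⟨m, fun i => c i • a i, b, fun i => by simp [hab i], ?_⟩
    simp [hg]
  · rintro ⟨m, a, b, hab, rfl⟩
    exact Submodule.sum_mem _ fun i _ => vecMulVec_mem_isotropicRankOneSpan (hab i)

theorem trace_eq_zero_of_mem_isotropicRankOneSpan {M : Matrix n n R}
    (hM : M ∈ isotropicRankOneSpan R n) : trace M = 0 := by
  refine (Submodule.span_le (p := LinearMap.ker (traceLinearMap n R R))).mpr ?_ hM
  rintro _ ⟨a, b, hab, rfl⟩
  simpa using hab

variable [DecidableEq n]

theorem single_mem_isotropicRankOneSpan {j k : n} (hjk : j ≠ k) :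
    single j k (1 : R) ∈ isotropicRankOneSpan R n := by
  rw [single_eq_single_vecMulVec_single]
  exact vecMulVec_mem_isotropicRankOneSpan (by simp [hjk])

theorem single_sub_single_mem_isotropicRankOneSpan (j k : n) :
    single j j (1 : R) - single k k 1 ∈ isotropicRankOneSpan R n := by
  rcases eq_or_ne j k with rfl | hjk
  · simp
  set e : n → n → R := fun i => Pi.single i 1
  have hsplit : single j j (1 : R) - single k k 1 =
      vecMulVec (e j + e k) (e j - e k) + (single j k 1 - single k j 1) := by
    simp only [e, single_eq_single_vecMulVec_single, add_vecMulVec, vecMulVec_sub]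
    abel
  rw [hsplit]
  refine add_mem (vecMulVec_mem_isotropicRankOneSpan ?_) (sub_mem
    (single_mem_isotropicRankOneSpan hjk) (single_mem_isotropicRankOneSpan hjk.symm))
  simp [e, hjk, hjk.symm]

theorem sub_trace_smul_single_mem_isotropicRankOneSpan (C : Matrix n n R) (i₀ : n) :
    C - trace C • single i₀ i₀ 1 ∈ isotropicRankOneSpan R n := by
  have hunit : ∀ j k : n,
      single j k (1 : R) - (if j = k then single i₀ i₀ 1 else 0) ∈ isotropicRankOneSpan R n := by
    intro j k
    split_ifs with hjk
    · exact hjk ▸ single_sub_single_mem_isotropicRankOneSpan j i₀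
    · simpa using single_mem_isotropicRankOneSpan hjk
  have hsum : C - trace C • single i₀ i₀ 1 =
      ∑ j, ∑ k, C j k • (single j k 1 - if j = k then single i₀ i₀ 1 else 0) := by
    simp only [smul_sub, Finset.sum_sub_distrib, smul_ite, smul_zero, Finset.sum_ite_eq,
      Finset.mem_univ, if_true, smul_single, smul_eq_mul, mul_one, ← matrix_eq_sum_single,
      trace, diag, Finset.sum_smul]
  rw [hsum]
  exact Submodule.sum_mem _ fun j _ => Submodule.sum_mem _ fun k _ =>
    Submodule.smul_mem _ _ (hunit j k)

theorem mem_isotropicRankOneSpan_iff_trace_eq_zero {C : Matrix n n R} :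
    C ∈ isotropicRankOneSpan R n ↔ trace C = 0 := by
  refine ⟨trace_eq_zero_of_mem_isotropicRankOneSpan, fun hC => ?_⟩
  cases isEmpty_or_nonempty n
  · simp [Subsingleton.elim C 0]
  · obtain ⟨i₀⟩ := ‹Nonempty n›
    simpa [hC] using sub_trace_smul_single_mem_isotropicRankOneSpan C i₀

end Matrix

/-- An `N×N` real matrix has trace zero if and only if it is a finite sum of rank-one
matrices `aᵢ ⊗ bᵢ` built from orthogonal (isotropic) pairs of vectors `aᵢ · bᵢ = 0`. -/
theorem trace_eq_zero_iff_sum_vecMulVec_orthogonal (N : ℕ)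
    (C : Matrix (Fin N) (Fin N) ℝ) :
    Matrix.trace C = 0 ↔
      ∃ (m : ℕ) (a b : Fin m → (Fin N → ℝ)),
        (∀ i, dotProduct (a i) (b i) = 0) ∧
        C = ∑ i, Matrix.vecMulVec (a i) (b i) := by
  rw [← mem_isotropicRankOneSpan_iff_trace_eq_zero, mem_isotropicRankOneSpan_iff]
end

section
/- One-dimensional approximation theorem for structured deformations: let g : [0,1] → ℝ be Lipschitz with constant L, let G : (0,1) → ℝ be Lebesgue integrable, and for each integer n ≥ 1 define u_n : (0,1) → ℝ by u_n(x) = g(⌊nx⌋/n) + ∫_{⌊nx⌋/n}^{x} G(t) dt. Then (i) ∫₀¹ |u_n(x) − g(x)| dx ≤ (L + ∫₀¹ |G(t)| dt)/n, so that u_n → g in L¹((0,1)); and (ii) for Lebesgue-almost every x ∈ (0,1), u_n is differentiable at x with u_n'(x) = G(x). -/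
/-!
On each cell `[k/n, (k+1)/n)` of the uniform grid of mesh `1/n`, `u_n` is `g (k/n)` plus a
primitive of `G`. Hence `|u_n - g|` is at most `L/n` (Lipschitz bound over one cell) plus the mass
of `|G|` on that cell; integrating this step function over `[0,1]` gives `(L + ∫₀¹ |G|)/n`.
Away from the countably many nodes `k/n` the integer part `⌊n x⌋` is locally constant, so there
`u_n` is locally a primitive of `G`, and the Lebesgue differentiation theorem gives `u_n' = G`
almost everywhere.
-/

open MeasureTheory Filter Set
open scoped NNReal Topology

theorem intervalIntegral.integral_mono_of_nonneg_of_le_Ioo {f g : ℝ → ℝ} {a b : ℝ}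
    (hab : a ≤ b) (hf : ∀ x ∈ Ioo a b, 0 ≤ f x) (hg : IntervalIntegrable g volume a b)
    (h : ∀ x ∈ Ioo a b, f x ≤ g x) : ∫ x in a..b, f x ≤ ∫ x in a..b, g x := by
  rw [integral_of_le hab, integral_of_le hab, integral_Ioc_eq_integral_Ioo,
    integral_Ioc_eq_integral_Ioo]
  exact integral_mono_of_nonneg (ae_restrict_of_forall_mem measurableSet_Ioo hf)
    (hg.1.mono_set Ioo_subset_Ioc_self) (ae_restrict_of_forall_mem measurableSet_Ioo h)

section UniformGrid

variable {n : ℕ} {x : ℝ}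

theorem floor_mul_eq_of_le_of_lt (hn : 0 < n) {k : ℤ} (h₁ : (k : ℝ) / n ≤ x)
    (h₂ : x < (k + 1) / n) : ⌊(n : ℝ) * x⌋ = k := by
  have hn' : (0 : ℝ) < n := Nat.cast_pos.2 hn
  rw [div_le_iff₀ hn'] at h₁
  rw [lt_div_iff₀ hn'] at h₂
  rw [Int.floor_eq_iff]
  constructor <;> linarith

theorem floor_mul_div_le (hn : 0 < n) (x : ℝ) : (⌊(n : ℝ) * x⌋ : ℝ) / n ≤ x := by
  rw [div_le_iff₀ (Nat.cast_pos.2 hn), mul_comm]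
  exact Int.floor_le _

theorem lt_floor_mul_add_one_div (hn : 0 < n) (x : ℝ) : x < (⌊(n : ℝ) * x⌋ + 1) / n := by
  rw [lt_div_iff₀ (Nat.cast_pos.2 hn), mul_comm]
  exact Int.lt_floor_add_one _

theorem floor_mul_div_nonneg (hx : 0 ≤ x) : 0 ≤ (⌊(n : ℝ) * x⌋ : ℝ) / n :=
  div_nonneg (by exact_mod_cast Int.floor_nonneg.2 (by positivity)) n.cast_nonneg

theorem floor_mul_add_one_div_le_one (hn : 0 < n) (hx : x < 1) :
    (⌊(n : ℝ) * x⌋ + 1 : ℝ) / n ≤ 1 := by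
  have hn' : (0 : ℝ) < n := Nat.cast_pos.2 hn
  have hlt : ⌊(n : ℝ) * x⌋ < n := Int.floor_lt.2 (by push_cast; nlinarith)
  rw [div_le_one hn']
  exact_mod_cast hlt

theorem floor_mul_eventuallyEq (hn : 0 < n) (hx : ∀ k : ℤ, (n : ℝ) * x ≠ k) :
    ∀ᶠ y in 𝓝 x, ⌊(n : ℝ) * y⌋ = ⌊(n : ℝ) * x⌋ := by
  have hleft : (⌊(n : ℝ) * x⌋ : ℝ) / n < x := by
    refine (floor_mul_div_le hn x).lt_of_ne fun h => hx ⌊(n : ℝ) * x⌋ ?_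
    linarith [(div_eq_iff (Nat.cast_ne_zero.2 hn.ne')).1 h]
  filter_upwards [Ioo_mem_nhds hleft (lt_floor_mul_add_one_div hn x)] with y hy
  exact floor_mul_eq_of_le_of_lt hn hy.1.le hy.2

theorem ae_forall_mul_ne_intCast (hn : n ≠ 0) : ∀ᵐ x : ℝ, ∀ k : ℤ, (n : ℝ) * x ≠ k := by
  filter_upwards [(countable_range fun k : ℤ => (k : ℝ) / n).ae_notMem volume] with x hx k hk
  have hn' : (n : ℝ) ≠ 0 := Nat.cast_ne_zero.2 hn
  exact hx ⟨k, by simp only [div_eq_iff hn']; linarith⟩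

theorem sum_integral_uniform_cells (hn : 0 < n) {f : ℝ → ℝ}
    (hf : IntervalIntegrable f volume 0 1) :
    ∑ k ∈ Finset.range n, ∫ t in (k : ℝ) / n..(k + 1) / n, f t = ∫ t in (0 : ℝ)..1, f t := by
  have hcell : ∀ k < n, IntervalIntegrable f volume ((k : ℕ) / n : ℝ) ((k + 1 : ℕ) / n) := by
    intro k hk
    have hmem : ∀ j ≤ n, ((j : ℕ) / n : ℝ) ∈ uIcc 0 1 := fun j hj => by
      rw [uIcc_of_le zero_le_one]
      exact ⟨by positivity, div_le_one_of_le₀ (by exact_mod_cast hj) n.cast_nonneg⟩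
    exact hf.mono_set (uIcc_subset_uIcc (hmem k hk.le) (hmem (k + 1) hk))
  simpa [Nat.cast_add, hn.ne'] using intervalIntegral.sum_integral_adjacent_intervals hcell

theorem eqOn_comp_floor_mul_Ioo (hn : 0 < n) (c : ℤ → ℝ) (k : ℤ) :
    EqOn (fun x => c ⌊(n : ℝ) * x⌋) (fun _ => c k) (Ioo ((k : ℝ) / n) ((k + 1) / n)) :=
  fun _ hx => congrArg c (floor_mul_eq_of_le_of_lt hn hx.1.le hx.2)

theorem intervalIntegrable_comp_floor_mul (hn : 0 < n) (c : ℤ → ℝ) :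
    IntervalIntegrable (fun x => c ⌊(n : ℝ) * x⌋) volume 0 1 := by
  have hcell : ∀ k < n, IntervalIntegrable (fun x => c ⌊(n : ℝ) * x⌋) volume
      ((k : ℕ) / n : ℝ) ((k + 1 : ℕ) / n) := fun k _ => by
    have heq := eqOn_comp_floor_mul_Ioo hn c k
    rw [Int.cast_natCast, ← Nat.cast_succ, ← uIoo_of_le (by gcongr; omega)] at heq
    exact (intervalIntegrable_congr_uIoo heq).2 intervalIntegrable_const
  simpa [hn.ne'] using IntervalIntegrable.trans_iterate (a := fun k : ℕ => (k : ℝ) / n) hcell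

theorem integral_comp_floor_mul (hn : 0 < n) (c : ℤ → ℝ) :
    ∫ x in (0 : ℝ)..1, c ⌊(n : ℝ) * x⌋ = (∑ k ∈ Finset.range n, c k) / n := by
  have hcell : ∀ k : ℕ, ∫ x in (k : ℝ) / n..(k + 1) / n, c ⌊(n : ℝ) * x⌋ = c k / n := by
    intro k
    have heq := eqOn_comp_floor_mul_Ioo hn c k
    rw [Int.cast_natCast] at heq
    rw [intervalIntegral.integral_congr_Ioo_of_le (by gcongr; linarith) heq,
      intervalIntegral.integral_const, smul_eq_mul]
    field_simp
    ring
  rw [← sum_integral_uniform_cells hn (intervalIntegrable_comp_floor_mul hn c),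
    Finset.sum_div]
  exact Finset.sum_congr rfl fun k _ => hcell k

end UniformGrid

noncomputable def approximant (n : ℕ) (g G : ℝ → ℝ) (x : ℝ) : ℝ :=
  g ((⌊(n : ℝ) * x⌋ : ℝ) / n) + ∫ t in ((⌊(n : ℝ) * x⌋ : ℝ) / n)..x, G t

section Approximant

variable {n : ℕ} {L : ℝ≥0} {g G : ℝ → ℝ}

theorem abs_approximant_sub_le (hn : 0 < n) (hg : LipschitzOnWith L g (Icc 0 1))
    (hG : IntervalIntegrable G volume 0 1) {x : ℝ} (hx : x ∈ Ico 0 1) :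
    |approximant n g G x - g x|
      ≤ L / n + ∫ t in (⌊(n : ℝ) * x⌋ : ℝ) / n..(⌊(n : ℝ) * x⌋ + 1) / n, |G t| := by
  set a : ℝ := (⌊(n : ℝ) * x⌋ : ℝ) / n
  set b : ℝ := (⌊(n : ℝ) * x⌋ + 1 : ℝ) / n
  have ha : 0 ≤ a := floor_mul_div_nonneg hx.1
  have hax : a ≤ x := floor_mul_div_le hn x
  have hxb : x < b := lt_floor_mul_add_one_div hn x
  have hb : b ≤ 1 := floor_mul_add_one_div_le_one hn hx.2
  have hba : b - a = 1 / n := by simp only [a, b]; ring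
  have hGab : IntervalIntegrable (fun t => |G t|) volume a b :=
    hG.abs.mono_set <| by
      rw [uIcc_of_le zero_le_one, uIcc_of_le (hax.trans hxb.le)]
      exact Icc_subset_Icc ha hb
  have hlip : |g a - g x| ≤ L / n := by
    calc |g a - g x| ≤ L * |a - x| := by
          simpa only [Real.dist_eq] using
            hg.dist_le_mul a ⟨ha, hax.trans hx.2.le⟩ x ⟨hx.1, hx.2.le⟩
      _ ≤ L * (1 / n) := by
          gcongr
          rw [abs_of_nonpos (by linarith)]
          linarith
      _ = L / n := by ring
  have hint : |∫ t in a..x, G t| ≤ ∫ t in a..b, |G t| :=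
    (intervalIntegral.abs_integral_le_integral_abs hax).trans
      (intervalIntegral.integral_mono_interval le_rfl hax hxb.le
        (ae_of_all _ fun t => abs_nonneg (G t)) hGab)
  calc |approximant n g G x - g x| = |(g a - g x) + ∫ t in a..x, G t| := by
        rw [approximant, add_sub_right_comm]
    _ ≤ |g a - g x| + |∫ t in a..x, G t| := abs_add_le _ _
    _ ≤ L / n + ∫ t in a..b, |G t| := add_le_add hlip hint

theorem integral_abs_approximant_sub_le (hn : 0 < n) (hg : LipschitzOnWith L g (Icc 0 1))
    (hG : IntervalIntegrable G volume 0 1) :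
    ∫ x in (0 : ℝ)..1, |approximant n g G x - g x| ≤ (L + ∫ t in (0 : ℝ)..1, |G t|) / n := by
  set c : ℤ → ℝ := fun k => L / n + ∫ t in (k : ℝ) / n..(k + 1) / n, |G t|
  calc ∫ x in (0 : ℝ)..1, |approximant n g G x - g x|
      ≤ ∫ x in (0 : ℝ)..1, c ⌊(n : ℝ) * x⌋ :=
        intervalIntegral.integral_mono_of_nonneg_of_le_Ioo zero_le_one
          (fun _ _ => abs_nonneg _) (intervalIntegrable_comp_floor_mul hn c)
          (fun _ hx => abs_approximant_sub_le hn hg hG (Ioo_subset_Ico_self hx))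
    _ = (∑ k ∈ Finset.range n, c k) / n := integral_comp_floor_mul hn c
    _ = (L + ∫ t in (0 : ℝ)..1, |G t|) / n := by
        simp only [c, Finset.sum_add_distrib, Int.cast_natCast, Finset.sum_const,
          Finset.card_range, nsmul_eq_mul, sum_integral_uniform_cells hn hG.abs]
        field_simp

theorem hasDerivAt_approximant (hn : 0 < n) {x : ℝ} (hx : ∀ k : ℤ, (n : ℝ) * x ≠ k)
    (hprim : HasDerivAt (fun y => ∫ t in (⌊(n : ℝ) * x⌋ : ℝ) / n..y, G t) (G x) x) :
    HasDerivAt (approximant n g G) (G x) x := by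
  refine (hprim.const_add (g ((⌊(n : ℝ) * x⌋ : ℝ) / n))).congr_of_eventuallyEq ?_
  filter_upwards [floor_mul_eventuallyEq hn hx] with y hy
  rw [approximant, hy]

theorem ae_hasDerivAt_approximant (hn : 0 < n) (hG : IntervalIntegrable G volume 0 1) :
    ∀ᵐ x ∂volume.restrict (Ioo 0 1), HasDerivAt (approximant n g G) (G x) x := by
  filter_upwards [ae_restrict_mem measurableSet_Ioo,
    ae_restrict_of_ae (ae_forall_mul_ne_intCast hn.ne'),
    ae_restrict_of_ae hG.ae_hasDerivAt_integral] with x hx hnode hftc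
  rw [uIcc_of_le zero_le_one] at hftc
  exact hasDerivAt_approximant hn hnode <| hftc (Ioo_subset_Icc_self hx) _
    ⟨floor_mul_div_nonneg hx.1.le, (floor_mul_div_le hn x).trans hx.2.le⟩

end Approximant

/-- One-dimensional approximation theorem for structured deformations: if `g` is
`L`-Lipschitz on `[0,1]`, `G` is integrable on `(0,1)`, and
`u_n x = g(⌊nx⌋/n) + ∫_{⌊nx⌋/n}^{x} G(t) dt`, then
(i) `∫₀¹ |u_n − g| ≤ (L + ∫₀¹ |G|)/n`, so `u_n → g` in `L¹((0,1))`, and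
(ii) for a.e. `x ∈ (0,1)` and every `n ≥ 1`, `u_n` is differentiable at `x` with
`u_n'(x) = G(x)`. -/
theorem oneD_approximation_structured_deformations
    (L : ℝ≥0) (g : ℝ → ℝ) (hg : LipschitzOnWith L g (Set.Icc (0 : ℝ) 1))
    (G : ℝ → ℝ) (hG : IntegrableOn G (Set.Ioo (0 : ℝ) 1))
    (u : ℕ → ℝ → ℝ)
    (hu : ∀ n : ℕ, ∀ x : ℝ, u n x =
      g ((⌊(n : ℝ) * x⌋ : ℝ) / n) + ∫ t in ((⌊(n : ℝ) * x⌋ : ℝ) / n)..x, G t) :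
    (∀ n : ℕ, 1 ≤ n →
      ∫ x in (0 : ℝ)..1, |u n x - g x| ≤ ((L : ℝ) + ∫ t in (0 : ℝ)..1, |G t|) / n) ∧
    Tendsto (fun n : ℕ => ∫ x in (0 : ℝ)..1, |u n x - g x|) atTop (nhds 0) ∧
    (∀ n : ℕ, 1 ≤ n → ∀ᵐ x ∂(volume.restrict (Set.Ioo (0 : ℝ) 1)),
      HasDerivAt (u n) (G x) x) := by
  have hG' : IntervalIntegrable G volume 0 1 :=
    (intervalIntegrable_iff_integrableOn_Ioo_of_le zero_le_one).2 hG
  have hu' : ∀ n, u n = approximant n g G := fun n => funext (hu n)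
  have hbound : ∀ n : ℕ, 1 ≤ n →
      ∫ x in (0 : ℝ)..1, |u n x - g x| ≤ ((L : ℝ) + ∫ t in (0 : ℝ)..1, |G t|) / n :=
    fun n hn => hu' n ▸ integral_abs_approximant_sub_le hn hg hG'
  refine ⟨hbound, ?_, fun n hn => hu' n ▸ ae_hasDerivAt_approximant hn hG'⟩
  exact squeeze_zero' (.of_forall fun n =>
      intervalIntegral.integral_nonneg zero_le_one fun _ _ => abs_nonneg _)
    (eventually_atTop.2 ⟨1, hbound⟩) (tendsto_const_div_atTop_nhds_zero_nat _)
end
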